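/- arXiv:2402.12116 — 7 statements merged into one kernel-verified Lean document; each statement's English description precedes it below -/
import Mathlib

section
/- If f is a discrete Morse function on a finite simplicial complex X and α is a k-simplex, then the set of (k+1)-cofaces β of α with f(β) ≤ f(α) and the set of (k−1)-faces ν of α with f(ν) ≥ f(α) cannot both be nonempty. -/
open Finset
open scoped Classical

universe u

/-- A finite abstract simplicial complex on vertex type `V`. -/
structure SComplex (V : Type u) [DecidableEq V] where
  faces : Finset (Finset V)
  nonempty_of_mem : ∀ s ∈ faces, s.Nonempty
  down_closed : ∀ s ∈ faces, ∀ t, t ⊆ s → t.Nonempty → t ∈ faces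

variable {V : Type u} [DecidableEq V]

/-- `σ` is a codimension-1 face of `τ`. -/
def Face1 (σ τ : Finset V) : Prop := σ ⊆ τ ∧ σ.card + 1 = τ.card

/-- `f` is a discrete Morse function on the collection of simplices `S`. -/
def IsDMFOn (S : Set (Finset V)) (f : Finset V → ℝ) : Prop :=
  ∀ α ∈ S, {β | β ∈ S ∧ Face1 α β ∧ f β ≤ f α}.Subsingleton ∧
           {ν | ν ∈ S ∧ Face1 ν α ∧ f α ≤ f ν}.Subsingleton

/-- `σ` is a critical cell of the discrete Morse function `f` on `S`. -/
def IsCriticalIn (S : Set (Finset V)) (f : Finset V → ℝ) (σ : Finset V) : Prop :=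
  σ ∈ S ∧ (¬ ∃ β ∈ S, Face1 σ β ∧ f β ≤ f σ) ∧ (¬ ∃ ν ∈ S, Face1 ν σ ∧ f σ ≤ f ν)

/-- The discrete vector field associated to a discrete Morse function. -/
def gradSet (S : Set (Finset V)) (f : Finset V → ℝ) : Set (Finset V × Finset V) :=
  {p | p.1 ∈ S ∧ p.2 ∈ S ∧ Face1 p.1 p.2 ∧ f p.2 ≤ f p.1}

/-- `W` is a discrete vector field on the collection of simplices `S`:
pairs `(α, β)` with `α` a codimension-1 face of `β`, each simplex in at most one pair. -/
def IsVFOn (S : Set (Finset V)) (W : Set (Finset V × Finset V)) : Prop :=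
  (∀ p ∈ W, p.1 ∈ S ∧ p.2 ∈ S ∧ Face1 p.1 p.2) ∧
  (∀ p ∈ W, ∀ q ∈ W, p ≠ q → p.1 ≠ q.1 ∧ p.1 ≠ q.2 ∧ p.2 ≠ q.1 ∧ p.2 ≠ q.2)

/-- One step of a `V`-path: from the pair `(α, β)` one may pass to the pair `(α', β')`
provided `α'` is a codimension-1 face of `β` different from `α`. -/
def VStep (p q : Finset V × Finset V) : Prop := Face1 q.1 p.2 ∧ q.1 ≠ p.1

/-- A `V`-path, recorded as its list of matched pairs `(αᵢ, βᵢ)`. -/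
def IsVPath (W : Set (Finset V × Finset V)) (l : List (Finset V × Finset V)) : Prop :=
  (∀ p ∈ l, p ∈ W) ∧ l.Chain' VStep

/-- `W` admits a nontrivial closed `V`-path. -/
def HasClosedVPath (W : Set (Finset V × Finset V)) : Prop :=
  ∃ p l, IsVPath W (p :: l) ∧ VStep ((p :: l).getLast (List.cons_ne_nil p l)) p

/-- A discrete gradient: a discrete vector field with no nontrivial closed paths. -/
def IsGradientOn (S : Set (Finset V)) (W : Set (Finset V × Finset V)) : Prop :=
  IsVFOn S W ∧ ¬ HasClosedVPath W

/-- The critical cells of the vector field `W` among the simplices of `S`. -/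
def critOf (W : Set (Finset V × Finset V)) (S : Set (Finset V)) : Set (Finset V) :=
  {s | s ∈ S ∧ ∀ p ∈ W, p.1 ≠ s ∧ p.2 ≠ s}

/-- The chains (nonempty totally ordered collections) of simplices from `K`;
these are the simplices of the order complex `S_K`. -/
def chainsOf (K : Set (Finset V)) : Set (Finset (Finset V)) :=
  {C | C.Nonempty ∧ ↑C ⊆ K ∧ IsChain (· ⊆ ·) (C : Set (Finset V))}

/-- The open simplicial complex `K = X \ T`. -/
def Kset (X T : SComplex V) : Set (Finset V) :=
  (↑X.faces : Set (Finset V)) \ ↑T.faces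

/-- The level "subcomplex" determined by the value `a`:
all simplices contained in some simplex of `f`-value at most `a`. -/
def sublevel (S : Set (Finset V)) (f : Finset V → ℝ) (a : ℝ) : Set (Finset V) :=
  {τ | τ.Nonempty ∧ ∃ σ ∈ S, f σ ≤ a ∧ τ ⊆ σ}

/-- The geometric realization of a collection of (open) simplices on vertex set `V`,
as the set of convex weights whose support is a member of the collection. -/
noncomputable def realize [Fintype V] (L : Set (Finset V)) : Set (V → ℝ) :=
  {w | (∀ v, 0 ≤ w v) ∧ (∑ v, w v = 1) ∧ (Finset.univ.filter fun v => w v ≠ 0) ∈ L}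

/-- `A` is a strong deformation retract of `Y`. -/
def IsStrongDefRetract {Z : Type*} [TopologicalSpace Z] (Y A : Set Z) : Prop :=
  A ⊆ Y ∧ ∃ H : C(↥Y × ↥unitInterval, ↥Y),
    (∀ y, H (y, 0) = y) ∧ (∀ y, ((H (y, 1) : ↥Y) : Z) ∈ A) ∧
    ∀ y : ↥Y, (y : Z) ∈ A → ∀ t, H (y, t) = y

/-- An elementary collapse: remove a free pair `(σ, τ)`. -/
def ElemCollapse (Y Y' : Set (Finset V)) : Prop :=
  ∃ σ τ, σ ∈ Y ∧ τ ∈ Y ∧ Face1 σ τ ∧ (∀ ρ ∈ Y, σ ⊂ ρ → ρ = τ) ∧ Y' = Y \ {σ, τ}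

section Morse

variable [LinearOrder V] [Fintype V]

/-- The simplicial incidence sign of a codimension-1 face `σ` of `τ`. -/
noncomputable def incSign (σ τ : Finset V) : ℤ :=
  if Face1 σ τ then (-1 : ℤ) ^ (∑ v ∈ τ \ σ, (τ.filter fun x => x < v).card) else 0

/-- The first cell of a path, or `σ` if the path is empty. -/
def nextCell (σ : Finset V) : List (Finset V × Finset V) → Finset V
  | [] => σ
  | q :: _ => q.1

/-- The sign (Forman index factor) of a gradient path ending at `σ`. -/
noncomputable def pathSign (σ : Finset V) : List (Finset V × Finset V) → ℤ
  | [] => 1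
  | (a, b) :: rest => (-(incSign a b) * incSign (nextCell σ rest) b) * pathSign σ rest

/-- The gradient paths from (the boundary of) a critical cell `τ` to a critical cell `σ`. -/
def gradPaths (W : Set (Finset V × Finset V)) (τ σ : Finset V) :
    Set (List (Finset V × Finset V)) :=
  {l | IsVPath W l ∧ (∀ q ∈ l.head?, Face1 q.1 τ) ∧ (l = [] → Face1 σ τ) ∧
       (∀ q ∈ l.getLast?, Face1 σ q.2 ∧ σ ≠ q.1)}

/-- The coefficient of `σ` in the Morse boundary of `τ`:
the signed count of gradient paths from `τ` to `σ`. -/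
noncomputable def morseCoeff (W : Set (Finset V × Finset V)) (τ σ : Finset V) : ℤ :=
  ∑ᶠ l ∈ gradPaths W τ σ, incSign (nextCell σ l) τ * pathSign σ l

/-- The cells of `S` with `i` vertices (i.e. of dimension `i - 1`). -/
def cellsD (S : Set (Finset V)) (i : ℕ) : Type u := {s : Finset V // s ∈ S ∧ s.card = i}

noncomputable instance (S : Set (Finset V)) (i : ℕ) : Fintype (cellsD S i) := by
  unfold cellsD; infer_instance

/-- The Morse boundary operator from (geometric) degree `i` to degree `i - 1`,
on chains generated by the cells of `S`. -/
noncomputable def morseBd (W : Set (Finset V × Finset V)) (S : Set (Finset V)) (i : ℕ) :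
    (cellsD S (i + 1) → ℤ) →ₗ[ℤ] (cellsD S i → ℤ) :=
  Matrix.mulVecLin (Matrix.of fun (σ : cellsD S i) (τ : cellsD S (i + 1)) =>
    morseCoeff W τ.1 σ.1)

/-- The simplicial boundary operator on chains generated by the cells of `S`
(faces outside `S` are dropped; for `S = X \ T` this is the relative chain complex). -/
noncomputable def simpBd (S : Set (Finset V)) (i : ℕ) :
    (cellsD S (i + 1) → ℤ) →ₗ[ℤ] (cellsD S i → ℤ) :=
  Matrix.mulVecLin (Matrix.of fun (σ : cellsD S i) (τ : cellsD S (i + 1)) =>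
    incSign σ.1 τ.1)

end Morse

/-- Homology at a spot of a (would-be) chain complex: the kernel of `d1`
modulo (the pullback of) the image of `d2`. -/
abbrev Hgy {R A B C : Type*} [Ring R] [AddCommGroup A] [AddCommGroup B] [AddCommGroup C]
    [Module R A] [Module R B] [Module R C] (d1 : B →ₗ[R] A) (d2 : C →ₗ[R] B) : Type _ :=
  LinearMap.ker d1 ⧸ Submodule.comap (LinearMap.ker d1).subtype (LinearMap.range d2)

/-- The homology in geometric degree `i` of the Morse complex of the gradient `W`
with cells drawn from `S` (typically `S` = critical cells of `W`). -/
noncomputable abbrev MorseHomology [LinearOrder V] [Fintype V]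
    (W : Set (Finset V × Finset V)) (S : Set (Finset V)) (i : ℕ) : Type u :=
  Hgy (morseBd W S i) (morseBd W S (i + 1))

/-- The relative simplicial homology `H_i(X, T)` in geometric degree `i`, presented as the
homology of the chain complex generated by the cells of `K = X \ T`; for an open simplicial
complex `K` this is the Borel–Moore homology `H_i^{BM}(K)`. -/
noncomputable abbrev BMHomology [LinearOrder V] [Fintype V] (K : Set (Finset V)) (i : ℕ) :
    Type u :=
  Hgy (simpBd K i) (simpBd K (i + 1))

/-- A cell of the order complex is critical for the induced gradient `W` (the restriction of
the gradient `V'` on `sd X` to `S`) if it is `V'`-critical or its `V'`-partner lies outside `S`. -/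
def WCritOf (S : Set (Finset V)) (V' : Set (Finset V × Finset V)) (C : Finset V) : Prop :=
  C ∈ S ∧ ((∀ p ∈ V', p.1 ≠ C ∧ p.2 ≠ C) ∨
           (∃ p ∈ V', (p.1 = C ∧ p.2 ∉ S) ∨ (p.2 = C ∧ p.1 ∉ S)))

/-- `σ` has height `i` in `K`: the longest chain of simplices of `K` ending at `σ`
has `i + 1` elements. -/
def HasHeight (K : Set (Finset V)) (σ : Finset V) (i : ℕ) : Prop :=
  IsGreatest {n | ∃ l : List (Finset V), l.length = n ∧ l.Chain' (· ⊂ ·) ∧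
    (∀ s ∈ l, s ∈ K) ∧ l.getLast? = some σ} (i + 1)

/-! If `ν < α < β` with `f β ≤ f α ≤ f ν`, the interval `[ν, β]` contains a second
codimension-one face `α'` of `β`, namely `β` minus a vertex of `α \ ν`. Either `f β ≤ f α'`,
and `β` has two faces `α, α'` of value at least `f β`, or `f α' < f β ≤ f ν`, and `ν` has two
cofaces `α, α'` of value at most `f ν`. -/

theorem Face1.exists_ne_face1_face1 {V : Type*} [DecidableEq V] {ν α β : Finset V}
    (hνα : Face1 ν α) (hαβ : Face1 α β) : ∃ α', α' ≠ α ∧ Face1 ν α' ∧ Face1 α' β := by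
  obtain ⟨x, hxα, hxν⟩ := Finset.exists_mem_notMem_of_card_lt_card
    (show ν.card < α.card by rw [← hνα.2]; omega)
  have hcard : (β.erase x).card = β.card - 1 := Finset.card_erase_of_mem (hαβ.1 hxα)
  refine ⟨β.erase x, fun h => Finset.notMem_erase x β (h ▸ hxα), ⟨?_, ?_⟩,
    Finset.erase_subset x β, ?_⟩
  · exact Finset.subset_erase.mpr ⟨hνα.1.trans hαβ.1, hxν⟩
  all_goals have := hνα.2; have := hαβ.2; omega

theorem IsDMFOn.eq_of_face1_face1 {V : Type*} {S : Set (Finset V)} {f : Finset V → ℝ}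
    (hf : IsDMFOn S f) {ν α α' β : Finset V} (hν : ν ∈ S) (hα : α ∈ S) (hα' : α' ∈ S) (hβ : β ∈ S)
    (hνα : Face1 ν α) (hαβ : Face1 α β) (hνα' : Face1 ν α') (hα'β : Face1 α' β)
    (hfβα : f β ≤ f α) (hfαν : f α ≤ f ν) : α' = α := by
  by_cases hfβα' : f β ≤ f α'
  · exact (hf β hβ).2 ⟨hα', hα'β, hfβα'⟩ ⟨hα, hαβ, hfβα⟩
  · have hfα'ν : f α' ≤ f ν := by linarith
    exact (hf ν hν).1 ⟨hα', hνα', hfα'ν⟩ ⟨hα, hνα, hfαν⟩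

/-- For a discrete Morse function on a finite simplicial complex, the two
exceptional sets at a simplex `α` cannot both be nonempty (Forman, Lemma 2.5). -/
theorem stmt_0 {V : Type u} [DecidableEq V] (X : SComplex V) (f : Finset V → ℝ)
    (hf : IsDMFOn (↑X.faces : Set (Finset V)) f) (α : Finset V) (hα : α ∈ X.faces) :
    ¬ ({β | β ∈ X.faces ∧ Face1 α β ∧ f β ≤ f α}.Nonempty ∧
       {ν | ν ∈ X.faces ∧ Face1 ν α ∧ f α ≤ f ν}.Nonempty) := by
  rintro ⟨⟨β, hβ, hαβ, hfβα⟩, ⟨ν, hν, hνα, hfαν⟩⟩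
  obtain ⟨α', hα'α, hνα', hα'β⟩ := hνα.exists_ne_face1_face1 hαβ
  have hα' : α' ∈ X.faces := X.down_closed β hβ α' hα'β.1
    (Finset.card_pos.mp (by rw [← hνα'.2]; omega))
  exact hα'α (hf.eq_of_face1_face1 hν hα hα' hβ hνα hαβ hνα' hα'β hfβα hfαν)
end

section
/- The discrete vector field V_f associated to a discrete Morse function f on a finite simplicial complex X has no nontrivial closed V-paths; that is, V_f is a discrete gradient. -/
/-!
Along a `V`-path `αᵢ < βᵢ > αᵢ₊₁`, the face `αᵢ₊₁ ≠ αᵢ` of `βᵢ` has `f αᵢ₊₁ < f βᵢ`, since `βᵢ`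
has at most one face with a larger or equal value; hence `f βᵢ₊₁ ≤ f αᵢ₊₁ < f βᵢ`, so `f` strictly
decreases along the path and the path cannot close up. That `V_f` is a discrete vector field at
all is Forman's lemma: no simplex is both the top and the bottom of a pair.
-/

open Finset
open scoped Classical

universe u

variable {V : Type u} [DecidableEq V]

namespace Face1

lemma exists_ne_between {ν σ τ : Finset V} (h₁ : Face1 ν σ) (h₂ : Face1 σ τ) :
    ∃ σ', σ' ≠ σ ∧ Face1 ν σ' ∧ Face1 σ' τ := by
  obtain ⟨hsub₁, hcard₁⟩ := h₁
  obtain ⟨hsub₂, hcard₂⟩ := h₂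
  obtain ⟨v, hvτ, hvσ⟩ := exists_mem_notMem_of_card_lt_card (s := σ) (t := τ) (by omega)
  have hcard : #(insert v ν) = #ν + 1 := card_insert_of_notMem fun h => hvσ (hsub₁ h)
  refine ⟨insert v ν, fun h => hvσ (h ▸ mem_insert_self v ν), ⟨subset_insert v ν, hcard.symm⟩,
    insert_subset hvτ (hsub₁.trans hsub₂), by omega⟩

end Face1

namespace IsDMFOn

variable {S : Set (Finset V)} {f : Finset V → ℝ}

omit [DecidableEq V] in
lemma eq_of_face1_up (hf : IsDMFOn S f) {α β β' : Finset V} (hα : α ∈ S)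
    (hβ : β ∈ S) (hαβ : Face1 α β) (hfβ : f β ≤ f α)
    (hβ' : β' ∈ S) (hαβ' : Face1 α β') (hfβ' : f β' ≤ f α) : β = β' :=
  (hf α hα).1 ⟨hβ, hαβ, hfβ⟩ ⟨hβ', hαβ', hfβ'⟩

omit [DecidableEq V] in
lemma eq_of_face1_down (hf : IsDMFOn S f) {β α α' : Finset V} (hβ : β ∈ S)
    (hα : α ∈ S) (hαβ : Face1 α β) (hfα : f β ≤ f α)
    (hα' : α' ∈ S) (hα'β : Face1 α' β) (hfα' : f β ≤ f α') : α = α' :=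
  (hf β hβ).2 ⟨hα, hαβ, hfα⟩ ⟨hα', hα'β, hfα'⟩

/-- Forman's lemma. The fourth face `σ'` of the diamond `ν < σ, σ' < τ` has either
`f σ' ≤ f ν`, making it a second up-partner of `ν`, or `f σ' > f ν ≥ f τ`, making it a second
down-partner of `τ`. -/
lemma not_face1_le_of_face1_le {X : SComplex V} (hf : IsDMFOn (X.faces : Set (Finset V)) f)
    {ν σ τ : Finset V} (hν : ν ∈ X.faces) (hσ : σ ∈ X.faces) (hτ : τ ∈ X.faces)
    (h₁ : Face1 ν σ) (h₂ : Face1 σ τ) (hfσ : f σ ≤ f ν) (hfτ : f τ ≤ f σ) : False := by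
  obtain ⟨σ', hne, h₁', h₂'⟩ := h₁.exists_ne_between h₂
  have hσ' : σ' ∈ X.faces := by
    refine X.down_closed τ hτ σ' h₂'.1 (card_pos.mp ?_)
    have := card_pos.mpr (X.nonempty_of_mem σ hσ)
    have := h₁.2
    have := h₁'.2
    omega
  rcases le_or_gt (f σ') (f ν) with hfσ' | hfσ'
  · exact hne (hf.eq_of_face1_up hν hσ' h₁' hfσ' hσ h₁ hfσ)
  · exact hne (hf.eq_of_face1_down hτ hσ' h₂' (by linarith) hσ h₂ hfτ)

lemma isVFOn_gradSet {X : SComplex V} (hf : IsDMFOn (X.faces : Set (Finset V)) f) :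
    IsVFOn (X.faces : Set (Finset V)) (gradSet (X.faces : Set (Finset V)) f) := by
  refine ⟨fun p ⟨h₁, h₂, hF, _⟩ => ⟨h₁, h₂, hF⟩, ?_⟩
  rintro ⟨α, β⟩ ⟨hα, hβ, hαβ, hfαβ⟩ ⟨α', β'⟩ ⟨hα', hβ', hαβ', hfαβ'⟩ hne
  refine ⟨?_, ?_, ?_, ?_⟩
  · intro h
    dsimp only at h
    subst h
    exact hne (congrArg (Prod.mk α) (hf.eq_of_face1_up hα hβ hαβ hfαβ hβ' hαβ' hfαβ'))
  · rintro rfl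
    exact hf.not_face1_le_of_face1_le hα' hα hβ hαβ' hαβ hfαβ' hfαβ
  · rintro rfl
    exact hf.not_face1_le_of_face1_le hα hβ hβ' hαβ hαβ' hfαβ hfαβ'
  · intro h
    dsimp only at h
    subst h
    exact hne (congrArg (Prod.mk · β) (hf.eq_of_face1_down hβ hα hαβ hfαβ hα' hαβ' hfαβ'))

omit [DecidableEq V] in
lemma lt_of_vStep (hf : IsDMFOn S f) {p q : Finset V × Finset V}
    (hp : p ∈ gradSet S f) (hq : q ∈ gradSet S f) (hpq : VStep p q) : f q.2 < f p.2 := by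
  obtain ⟨hp₁, hp₂, hpF, hpf⟩ := hp
  obtain ⟨hq₁, -, -, hqf⟩ := hq
  have : f q.1 < f p.2 := lt_of_not_ge fun h =>
    hpq.2 (hf.eq_of_face1_down hp₂ hq₁ hpq.1 h hp₁ hpF hpf)
  linarith

omit [DecidableEq V] in
lemma not_hasClosedVPath_gradSet (hf : IsDMFOn S f) : ¬ HasClosedVPath (gradSet S f) := by
  rintro ⟨p, l, ⟨hmem, hchain⟩, hclose⟩
  have hdesc : (p :: l).IsChain fun a b => f b.2 < f a.2 :=
    hchain.imp_of_mem_imp fun a b ha hb => hf.lt_of_vStep (hmem a ha) (hmem b hb)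
  have hle : ∀ q ∈ p :: l, f q.2 ≤ f p.2 :=
    hdesc.induction (fun q => f q.2 ≤ f p.2) _ (fun _ _ h h' => h.le.trans h') fun _ => le_rfl
  have hlast := List.getLast_mem (List.cons_ne_nil p l)
  have := hf.lt_of_vStep (hmem _ hlast) (hmem p List.mem_cons_self) hclose
  linarith [hle _ hlast]

end IsDMFOn

/-- The vector field associated to a discrete Morse function has no
nontrivial closed `V`-paths; that is, it is a discrete gradient. -/
theorem stmt_2 {V : Type u} [DecidableEq V] (X : SComplex V) (f : Finset V → ℝ)
    (hf : IsDMFOn (↑X.faces : Set (Finset V)) f) :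
    IsGradientOn (↑X.faces : Set (Finset V)) (gradSet (↑X.faces : Set (Finset V)) f) :=
  ⟨hf.isVFOn_gradSet, hf.not_hasClosedVPath_gradSet⟩
end

section
/- Let V be a discrete gradient on a finite simplicial complex X, and let H_V be the Hasse diagram of X with the edges corresponding to pairs in V reversed. Then H_V is an acyclic directed graph. -/
open Finset
open scoped Classical

universe u

variable {V : Type u} [DecidableEq V]

/-- The modified Hasse diagram: the edge `β → α` for each codimension-1 face-pair not in
`W`, reversed to `α → β` for each pair `(α, β) ∈ W`. -/
def hasseRel {V : Type u} [DecidableEq V] (S : Set (Finset V))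
    (W : Set (Finset V × Finset V)) (a b : Finset V) : Prop :=
  a ∈ S ∧ b ∈ S ∧ ((Face1 b a ∧ (b, a) ∉ W) ∨ (a, b) ∈ W)

/-!
Up-edges of `H_V` are the pairs of `V`, every other edge goes down one dimension, and since
no simplex lies in two pairs, two up-edges never follow each other. On a cycle pick a simplex
`α₀` of least dimension `c` among all simplices lying on cycles; every cycle through `α₀`
then stays in dimensions `≥ c`. It must leave `α₀` by an up-edge, and afterwards it alternates
between dimensions `c + 1` and `c`: a down-edge from dimension `c` would drop below `c`, and an
up-edge from dimension `c + 1` would follow another up-edge. The pairs met along the way form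
a closed `V`-path.
-/

theorem Relation.TransGen.restrict_cyclic {α : Type*} {r : α → α → Prop} {a : α}
    (h : Relation.TransGen r a a) :
    Relation.TransGen (fun x y => r x y ∧ Relation.TransGen r y y) a a := by
  have walk : ∀ u, Relation.ReflTransGen r u a → Relation.TransGen r a u →
      Relation.ReflTransGen (fun x y => r x y ∧ Relation.TransGen r y y) u a := by
    intro u hu
    induction hu using Relation.ReflTransGen.head_induction_on with
    | refl => exact fun _ => .refl
    | head huw hwa ih =>
      intro hau
      exact .head ⟨huw, Relation.TransGen.trans_right hwa (hau.tail huw)⟩ (ih (hau.tail huw))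
  obtain ⟨b, hab, hba⟩ := Relation.TransGen.head'_iff.mp h
  exact Relation.TransGen.head'_iff.mpr
    ⟨b, ⟨hab, Relation.TransGen.trans_right hba (.single hab)⟩, walk b hba (.single hab)⟩

section VectorField

variable {α : Type*} {S : Set (Finset α)} {W : Set (Finset α × Finset α)}

def VPathStep (W : Set (Finset α × Finset α)) (p q : Finset α × Finset α) : Prop :=
  q ∈ W ∧ VStep p q

theorem hasClosedVPath_of_transGen {p : Finset α × Finset α} (hp : p ∈ W)
    (h : Relation.TransGen (VPathStep W) p p) : HasClosedVPath W := by
  obtain ⟨q, hpq, hqp⟩ := Relation.TransGen.tail'_iff.mp h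
  obtain ⟨l, hchain, hlast⟩ := List.exists_isChain_cons_of_relationReflTransGen hpq
  exact ⟨p, l, ⟨hchain.induction (· ∈ W) _ (fun _ _ h _ => h.1) (fun _ => hp),
    hchain.imp fun _ _ h => h.2⟩, hlast ▸ hqp.2⟩

theorem IsVFOn.face1 (hW : IsVFOn S W) {a b : Finset α} (h : (a, b) ∈ W) : Face1 a b :=
  (hW.1 _ h).2.2

theorem IsVFOn.not_mem_of_mem_snd (hW : IsVFOn S W) {a b c : Finset α} (h : (a, b) ∈ W) :
    (b, c) ∉ W := by
  intro h'
  have hne : ((a, b) : Finset α × Finset α) ≠ (b, c) := by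
    rintro ⟨⟩
    have := (hW.face1 h).2
    omega
  exact (hW.2 _ h _ h' hne).2.2.1 rfl

end VectorField

section HasseDiagram

variable {S : Set (Finset V)} {W : Set (Finset V × Finset V)}

def hasseRelGE (S : Set (Finset V)) (W : Set (Finset V × Finset V)) (c : ℕ)
    (a b : Finset V) : Prop :=
  hasseRel S W a b ∧ c ≤ b.card

theorem IsVFOn.hasseRel_up_or_down (hW : IsVFOn S W) {a b : Finset V}
    (h : hasseRel S W a b) : ((a, b) ∈ W ∧ b.card = a.card + 1) ∨
      (Face1 b a ∧ (b, a) ∉ W ∧ b.card + 1 = a.card) := by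
  rcases h.2.2 with ⟨hf, hnW⟩ | hw
  · exact .inr ⟨hf, hnW, hf.2⟩
  · exact .inl ⟨hw, (hW.face1 hw).2.symm⟩

/-- The two conjuncts treat the two parities of an alternating walk (at a cell with `c + 1`
vertices entered by an up-edge, and at a cell with `c` vertices entered by a down-edge), so
that they can be proved together by induction along the walk. -/
theorem IsVFOn.exists_vPath_of_reflTransGen_hasseRelGE (hW : IsVFOn S W) {c : ℕ}
    {u v : Finset V} (hv : v.card = c) (h : Relation.ReflTransGen (hasseRelGE S W c) u v) :
    (∀ a, (a, u) ∈ W → a.card = c →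
      ∃ q, Relation.ReflTransGen (VPathStep W) (a, u) q ∧ Face1 v q.2 ∧ v ≠ q.1) ∧
    (u.card = c → ∀ p : Finset V × Finset V, Face1 u p.2 → u ≠ p.1 →
      ∃ q, Relation.ReflTransGen (VPathStep W) p q ∧ Face1 v q.2 ∧ v ≠ q.1) := by
  induction h using Relation.ReflTransGen.head_induction_on with
  | refl =>
    refine ⟨fun a ha hac => ?_, fun _ p hp hne => ⟨p, .refl, hp, hne⟩⟩
    have := (hW.face1 ha).2
    omega
  | @head u w huw _ ih =>
    refine ⟨fun a ha hac => ?_, fun huc p hp hne => ?_⟩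
    · rcases hW.hasseRel_up_or_down huw.1 with ⟨hup, _⟩ | ⟨hdown, hnW, hcard⟩
      · exact absurd hup (hW.not_mem_of_mem_snd ha)
      · have := (hW.face1 ha).2
        exact ih.2 (by omega) (a, u) hdown (by rintro rfl; exact hnW ha)
    · rcases hW.hasseRel_up_or_down huw.1 with ⟨hup, _⟩ | ⟨_, _, hcard⟩
      · obtain ⟨q, hq, hvq⟩ := ih.1 u hup huc
        exact ⟨q, .head ⟨hup, hp, hne⟩ hq, hvq⟩
      · have := huw.2
        omega

theorem IsVFOn.hasClosedVPath_of_transGen_hasseRelGE (hW : IsVFOn S W) {v : Finset V}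
    (h : Relation.TransGen (hasseRelGE S W v.card) v v) : HasClosedVPath W := by
  obtain ⟨w, hvw, hwv⟩ := Relation.TransGen.head'_iff.mp h
  rcases hW.hasseRel_up_or_down hvw.1 with ⟨hup, _⟩ | ⟨_, _, hcard⟩
  · obtain ⟨q, hq, hvq⟩ := (hW.exists_vPath_of_reflTransGen_hasseRelGE rfl hwv).1 v hup rfl
    exact hasClosedVPath_of_transGen hup (Relation.TransGen.tail' hq ⟨hup, hvq⟩)
  · have := hvw.2
    omega

end HasseDiagram

/-- The Hasse diagram of a finite simplicial complex with the edges of a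
discrete gradient reversed is an acyclic directed graph. -/
theorem stmt_5 {V : Type u} [DecidableEq V] (X : SComplex V)
    (W : Set (Finset V × Finset V)) (hW : IsGradientOn (↑X.faces : Set (Finset V)) W) :
    ∀ s, ¬ Relation.TransGen (hasseRel (↑X.faces : Set (Finset V)) W) s s := by
  intro s hs
  obtain ⟨v, hv, hmin⟩ := (InvImage.wf Finset.card wellFounded_lt).has_min
    {v | Relation.TransGen (hasseRel (↑X.faces : Set (Finset V)) W) v v} ⟨s, hs⟩
  have hle : (fun a b => hasseRel (↑X.faces : Set (Finset V)) W a b ∧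
      Relation.TransGen (hasseRel (↑X.faces : Set (Finset V)) W) b b) ≤
      hasseRelGE (↑X.faces : Set (Finset V)) W v.card :=
    fun _ b ⟨hab, hb⟩ => ⟨hab, not_lt.mp (hmin b hb)⟩
  exact hW.2 (hW.1.hasClosedVPath_of_transGen_hasseRelGE
    (Relation.TransGen.mono hle _ _ hv.restrict_cyclic))
end

section
/- For any discrete gradient V on a finite simplicial complex X, there exists an injective discrete Morse function f on X whose associated gradient V_f equals V. -/
open Finset
open scoped Classical

universe u

variable {V : Type u} [DecidableEq V]

/-!
Acyclicity of `W` makes the number of pairs reachable from a pair along `V`-paths drop strictly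
at every step. Ordering the pairs of each dimension by this rank, and placing each matched top
cell just below its partner, gives a lexicographic level that decreases exactly along the pairs
of `W` and increases along every other facet relation. Any injective refinement of this level,
embedded in `ℝ`, is the required Morse function.
-/

instance {α : Type*} [Countable α] : Countable (Lex α) := inferInstanceAs (Countable α)

theorem Set.Countable.exists_injOn_real_lt_of_lt {α γ : Type*} [LinearOrder γ] [Countable γ]
    {s : Set α} (hs : s.Countable) (g : α → γ) :
    ∃ f : α → ℝ, s.InjOn f ∧ ∀ a b, g a < g b → f a < f b := by
  obtain ⟨e, he⟩ := Set.countable_iff_exists_injOn.mp hs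
  obtain ⟨emb⟩ := Order.embedding_from_countable_to_dense (γ ×ₗ ℕ) ℝ
  refine ⟨fun a => emb (toLex (g a, e a)), fun a ha b hb hab => he ha hb ?_, fun a b h => ?_⟩
  · exact (Prod.ext_iff.mp (toLex.injective (emb.injective hab))).2
  · exact emb.strictMono (Prod.Lex.toLex_lt_toLex.mpr (Or.inl h))

theorem ncard_reflTransGen_lt_of_rel {α : Type*} {R : α → α → Prop} {a b : α}
    (hR : ¬ Relation.TransGen R a a) (hfin : {c | Relation.ReflTransGen R a c}.Finite)
    (hab : R a b) :
    {c | Relation.ReflTransGen R b c}.ncard < {c | Relation.ReflTransGen R a c}.ncard := by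
  refine Set.ncard_lt_ncard ((Set.ssubset_iff_of_subset fun c hc => ?_).mpr ⟨a, ?_, ?_⟩) hfin
  · exact Relation.ReflTransGen.head hab hc
  · exact Relation.ReflTransGen.refl
  · exact fun hba => hR (Relation.TransGen.head' hab hba)

section VectorField

variable {V : Type*} {S : Set (Finset V)} {W : Set (Finset V × Finset V)}
  {p q : Finset V × Finset V} {σ : Finset V}

theorem IsVFOn.eq_of_fst_eq (hW : IsVFOn S W) (hp : p ∈ W) (hq : q ∈ W) (h : p.1 = q.1) :
    p = q :=
  by_contra fun hpq => (hW.2 p hp q hq hpq).1 h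

theorem IsVFOn.eq_of_snd_eq (hW : IsVFOn S W) (hp : p ∈ W) (hq : q ∈ W) (h : p.2 = q.2) :
    p = q :=
  by_contra fun hpq => (hW.2 p hp q hq hpq).2.2.2 h

theorem IsVFOn.fst_ne_snd (hW : IsVFOn S W) (hp : p ∈ W) (hq : q ∈ W) : p.1 ≠ q.2 := by
  rcases eq_or_ne p q with rfl | hpq
  · intro h
    have := (hW.1 p hp).2.2.2
    rw [h] at this
    omega
  · exact (hW.2 p hp q hq hpq).2.1

theorem IsVFOn.isDMFOn (hW : IsVFOn S W) {f : Finset V → ℝ}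
    (hf : ∀ α ∈ S, ∀ β ∈ S, Face1 α β → (f β ≤ f α ↔ (α, β) ∈ W)) : IsDMFOn S f := by
  refine fun α hα => ⟨fun β hβ β' hβ' => ?_, fun ν hν ν' hν' => ?_⟩
  · have h := hW.eq_of_fst_eq ((hf α hα β hβ.1 hβ.2.1).1 hβ.2.2)
      ((hf α hα β' hβ'.1 hβ'.2.1).1 hβ'.2.2) rfl
    exact congrArg Prod.snd h
  · have h := hW.eq_of_snd_eq ((hf ν hν.1 α hα hν.2.1).1 hν.2.2)
      ((hf ν' hν'.1 α hα hν'.2.1).1 hν'.2.2) rfl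
    exact congrArg Prod.fst h

theorem IsVFOn.gradSet_eq (hW : IsVFOn S W) {f : Finset V → ℝ}
    (hf : ∀ α ∈ S, ∀ β ∈ S, Face1 α β → (f β ≤ f α ↔ (α, β) ∈ W)) : gradSet S f = W := by
  ext ⟨α, β⟩
  refine ⟨fun ⟨hα, hβ, hαβ, hle⟩ => (hf α hα β hβ hαβ).1 hle, fun hp => ?_⟩
  obtain ⟨hα, hβ, hαβ⟩ := hW.1 _ hp
  exact ⟨hα, hβ, hαβ, (hf α hα β hβ hαβ).2 hp⟩

def VStepIn (W : Set (Finset V × Finset V)) (p q : Finset V × Finset V) : Prop :=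
  p ∈ W ∧ q ∈ W ∧ VStep p q

theorem exists_isVPath_of_transGen {r : Finset V × Finset V}
    (h : Relation.TransGen (VStepIn W) p r) :
    ∃ l, IsVPath W (p :: l) ∧ VStep ((p :: l).getLast (List.cons_ne_nil p l)) r := by
  induction h using Relation.TransGen.head_induction_on with
  | single h => exact ⟨[], ⟨by simpa using h.1, List.isChain_singleton _⟩, h.2.2⟩
  | @head a b hab _ ih =>
    obtain ⟨l, ⟨hmem, hchain⟩, hlast⟩ := ih
    refine ⟨b :: l, ⟨?_, List.isChain_cons_cons.mpr ⟨hab.2.2, hchain⟩⟩, ?_⟩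
    · rintro x (_ | ⟨_, hx⟩)
      exacts [hab.1, hmem x hx]
    · rwa [List.getLast_cons (List.cons_ne_nil b l)]

theorem not_transGen_vStepIn_self (hW : ¬ HasClosedVPath W) (p : Finset V × Finset V) :
    ¬ Relation.TransGen (VStepIn W) p p := fun h =>
  hW (by obtain ⟨l, hl⟩ := exists_isVPath_of_transGen h; exact ⟨p, l, hl⟩)

noncomputable def pairRank (W : Set (Finset V × Finset V)) (p : Finset V × Finset V) : ℕ :=
  {q | Relation.ReflTransGen (VStepIn W) p q}.ncard

theorem pairRank_lt (hW : ¬ HasClosedVPath W) (hfin : W.Finite) (h : VStepIn W p q) :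
    pairRank W q < pairRank W p := by
  refine ncard_reflTransGen_lt_of_rel (not_transGen_vStepIn_self hW p)
    ((hfin.insert p).subset fun r hr => ?_) h
  rcases (Relation.ReflTransGen.cases_tail_iff _ _ _).mp hr with rfl | ⟨_, _, hr⟩
  exacts [Set.mem_insert _ _, Set.mem_insert_of_mem _ hr.2.1]

noncomputable def morseLevel (W : Set (Finset V × Finset V)) (σ : Finset V) : ℕ ×ₗ ℕ :=
  if h : ∃ p ∈ W, p.1 = σ then toLex (σ.card + 1, 2 * pairRank W h.choose + 2)
  else if h : ∃ p ∈ W, p.2 = σ then toLex (σ.card, 2 * pairRank W h.choose + 1)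
  else toLex (σ.card + 1, 0)

theorem morseLevel_fst (hW : IsVFOn S W) (hp : p ∈ W) :
    morseLevel W p.1 = toLex (p.1.card + 1, 2 * pairRank W p + 2) := by
  have h : ∃ q ∈ W, q.1 = p.1 := ⟨p, hp, rfl⟩
  rw [morseLevel, dif_pos h, hW.eq_of_fst_eq h.choose_spec.1 hp h.choose_spec.2]

theorem morseLevel_snd (hW : IsVFOn S W) (hp : p ∈ W) :
    morseLevel W p.2 = toLex (p.2.card, 2 * pairRank W p + 1) := by
  have h₁ : ¬ ∃ q ∈ W, q.1 = p.2 := fun ⟨q, hq, h⟩ => hW.fst_ne_snd hq hp h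
  have h₂ : ∃ q ∈ W, q.2 = p.2 := ⟨p, hp, rfl⟩
  rw [morseLevel, dif_neg h₁, dif_pos h₂, hW.eq_of_snd_eq h₂.choose_spec.1 hp h₂.choose_spec.2]

theorem morseLevel_lt_card_add_two (W : Set (Finset V × Finset V)) (σ : Finset V) :
    morseLevel W σ < toLex (σ.card + 2, 0) := by
  unfold morseLevel
  split_ifs <;> simp [Prod.Lex.toLex_lt_toLex]

theorem card_add_one_le_morseLevel (h : ¬ ∃ p ∈ W, p.2 = σ) :
    toLex (σ.card + 1, 0) ≤ morseLevel W σ := by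
  unfold morseLevel
  split_ifs <;> simp [Prod.Lex.toLex_le_toLex]

theorem morseLevel_le_card_add_one (h : ¬ ∃ p ∈ W, p.1 = σ) :
    morseLevel W σ ≤ toLex (σ.card + 1, 0) := by
  unfold morseLevel
  split_ifs <;> simp [Prod.Lex.toLex_le_toLex]

theorem morseLevel_snd_lt_fst (hW : IsVFOn S W) (hp : p ∈ W) :
    morseLevel W p.2 < morseLevel W p.1 := by
  rw [morseLevel_fst hW hp, morseLevel_snd hW hp, ← (hW.1 p hp).2.2.2]
  simp [Prod.Lex.toLex_lt_toLex]

theorem morseLevel_lt_of_notMem (hW : IsVFOn S W) (hacyc : ¬ HasClosedVPath W)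
    (hfin : W.Finite) {α β : Finset V} (hαβ : Face1 α β) (hn : (α, β) ∉ W) :
    morseLevel W α < morseLevel W β := by
  by_cases hβ : ∃ q ∈ W, q.2 = β
  · obtain ⟨q, hq, rfl⟩ := hβ
    rw [morseLevel_snd hW hq, ← hαβ.2]
    by_cases hα : ∃ p ∈ W, p.1 = α
    · obtain ⟨p, hp, rfl⟩ := hα
      have hpq : p ≠ q := by
        rintro rfl
        exact hn hp
      have hrank := pairRank_lt hacyc hfin ⟨hq, hp, hαβ, (hW.2 p hp q hq hpq).1⟩
      rw [morseLevel_fst hW hp, Prod.Lex.toLex_lt_toLex]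
      omega
    · exact (morseLevel_le_card_add_one hα).trans_lt (by simp [Prod.Lex.toLex_lt_toLex])
  · calc morseLevel W α < toLex (α.card + 2, 0) := morseLevel_lt_card_add_two W α
      _ = toLex (β.card + 1, 0) := by rw [← hαβ.2]
      _ ≤ morseLevel W β := card_add_one_le_morseLevel hβ

end VectorField

/-- Every discrete gradient on a finite simplicial complex is the gradient
of some injective discrete Morse function. -/
theorem stmt_6 {V : Type u} [DecidableEq V] (X : SComplex V)
    (W : Set (Finset V × Finset V)) (hW : IsGradientOn (↑X.faces : Set (Finset V)) W) :
    ∃ f : Finset V → ℝ, Set.InjOn f (↑X.faces : Set (Finset V)) ∧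
      IsDMFOn (↑X.faces : Set (Finset V)) f ∧
      gradSet (↑X.faces : Set (Finset V)) f = W := by
  obtain ⟨hVF, hacyc⟩ := hW
  have hfin : W.Finite := (X.faces.finite_toSet.prod X.faces.finite_toSet).subset
    fun p hp => ⟨(hVF.1 p hp).1, (hVF.1 p hp).2.1⟩
  obtain ⟨f, hinj, hmono⟩ := X.faces.countable_toSet.exists_injOn_real_lt_of_lt (morseLevel W)
  have hf : ∀ α ∈ (↑X.faces : Set (Finset V)), ∀ β ∈ (↑X.faces : Set (Finset V)), Face1 α β →
      (f β ≤ f α ↔ (α, β) ∈ W) := fun α _ β _ hαβ =>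
    ⟨fun hle => by_contra fun hn =>
      (hmono _ _ (morseLevel_lt_of_notMem hVF hacyc hfin hαβ hn)).not_ge hle,
     fun hp => (hmono _ _ (morseLevel_snd_lt_fst hVF hp)).le⟩
  exact ⟨f, hinj, hVF.isDMFOn hf, hVF.gradSet_eq hf⟩
end

section
/- Let (X, T) be a finite simplicial pair, V_K a discrete gradient on K = X \ T (all pairs involve only simplices of K), and V_X its extension to X in which every simplex of T is critical. Then the Morse chain complex of K, generated in degree i by the critical i-cells of V_K with boundary given by counting gradient paths, maps isomorphically (as a chain complex) onto the quotient Morse complex M(X)/M(T). -/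
/-!
The critical cells of `X` are the critical cells of `K` together with the cells of `T`, so
extension by zero identifies the generators of `M(K)` with those of `M(X)/M(T)`. The Morse
boundary coefficient between two critical cells is a signed count of gradient paths, which
does not depend on whether the two cells are regarded in `K` or in `X`; hence the
identification commutes with the boundaries.
-/

open Finset
open scoped Classical

universe u

variable {V : Type u} [DecidableEq V]

/-- The submodule of the Morse complex of `X` consisting of chains supported on the
critical cells lying in `T` (this is the image of `M(T) = C(T)`). -/
noncomputable def TSub {V : Type u} [DecidableEq V] [LinearOrder V] [Fintype V]
    (X T : SComplex V) (W : Set (Finset V × Finset V)) (i : ℕ) :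
    Submodule ℤ (cellsD (critOf W (↑X.faces : Set (Finset V))) i → ℤ) :=
  ⨅ (s : cellsD (critOf W (↑X.faces : Set (Finset V))) i) (_ : s.1 ∉ T.faces),
    LinearMap.ker (LinearMap.proj (R := ℤ) (φ := fun _ => ℤ) s)

/-- The extension-by-zero map from the Morse chains of `K` to the Morse chains of `X`. -/
noncomputable def extMap {V : Type u} [DecidableEq V] [LinearOrder V] [Fintype V]
    (X T : SComplex V) (W : Set (Finset V × Finset V)) (i : ℕ) :
    (cellsD (critOf W (Kset X T)) i → ℤ) →ₗ[ℤ]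
      (cellsD (critOf W (↑X.faces : Set (Finset V))) i → ℤ) :=
  LinearMap.pi fun s =>
    if h : s.1 ∈ critOf W (Kset X T) then
      LinearMap.proj (R := ℤ) (φ := fun _ => ℤ)
        (⟨s.1, h, s.2.2⟩ : cellsD (critOf W (Kset X T)) i)
    else 0

/-- The canonical chain map `M(K) → M(X)/M(T)`. -/
noncomputable def qext {V : Type u} [DecidableEq V] [LinearOrder V] [Fintype V]
    (X T : SComplex V) (W : Set (Finset V × Finset V)) (i : ℕ) :
    (cellsD (critOf W (Kset X T)) i → ℤ) →ₗ[ℤ]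
      ((cellsD (critOf W (↑X.faces : Set (Finset V))) i → ℤ) ⧸ TSub X T W i) :=
  (TSub X T W i).mkQ.comp (extMap X T W i)

lemma critOf_mono {α : Type*} (W : Set (Finset α × Finset α)) {S S' : Set (Finset α)}
    (h : S ⊆ S') : critOf W S ⊆ critOf W S' :=
  fun _ hs => ⟨h hs.1, hs.2⟩

def cellsD.inclusion {α : Type*} {S S' : Set (Finset α)} (h : S ⊆ S') {i : ℕ}
    (s : cellsD S i) : cellsD S' i :=
  ⟨s.1, h s.2.1, s.2.2⟩

lemma cellsD.inclusion_injective {α : Type*} {S S' : Set (Finset α)} (h : S ⊆ S') {i : ℕ} :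
    Function.Injective (cellsD.inclusion h (i := i)) :=
  fun _ _ hst => Subtype.ext (congrArg (fun c : cellsD S' i => c.1) hst)

lemma mem_critOf_Kset_iff (X T : SComplex V) (W : Set (Finset V × Finset V)) (s : Finset V) :
    s ∈ critOf W (Kset X T) ↔ s ∈ critOf W (↑X.faces : Set (Finset V)) ∧ s ∉ T.faces := by
  simp only [critOf, Kset, Set.mem_sdiff, Set.mem_ofPred_eq, Finset.mem_coe]
  tauto

abbrev critKIncl (X T : SComplex V) (W : Set (Finset V × Finset V)) (i : ℕ) :
    cellsD (critOf W (Kset X T)) i → cellsD (critOf W (↑X.faces : Set (Finset V))) i :=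
  cellsD.inclusion (critOf_mono W Set.sdiff_subset)

lemma mem_range_critKIncl_iff (X T : SComplex V) (W : Set (Finset V × Finset V)) {i : ℕ}
    (s : cellsD (critOf W (↑X.faces : Set (Finset V))) i) :
    s ∈ Set.range (critKIncl X T W i) ↔ s.1 ∉ T.faces := by
  constructor
  · rintro ⟨t, rfl⟩
    exact ((mem_critOf_Kset_iff X T W t.1).mp t.2.1).2
  · intro hs
    exact ⟨⟨s.1, (mem_critOf_Kset_iff X T W s.1).mpr ⟨s.2.1, hs⟩, s.2.2⟩, rfl⟩

section QuotientMorseComplex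

variable [LinearOrder V] [Fintype V]

lemma extMap_apply (X T : SComplex V) (W : Set (Finset V × Finset V)) (i : ℕ)
    (x : cellsD (critOf W (Kset X T)) i → ℤ)
    (s : cellsD (critOf W (↑X.faces : Set (Finset V))) i) :
    extMap X T W i x s =
      if h : s.1 ∈ critOf W (Kset X T) then x ⟨s.1, h, s.2.2⟩ else 0 := by
  rw [extMap, LinearMap.pi_apply]
  split_ifs with h
  · exact congrArg (fun f : (cellsD (critOf W (Kset X T)) i → ℤ) →ₗ[ℤ] ℤ => f x) (dif_pos h)
  · exact congrArg (fun f : (cellsD (critOf W (Kset X T)) i → ℤ) →ₗ[ℤ] ℤ => f x) (dif_neg h)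

lemma extMap_critKIncl (X T : SComplex V) (W : Set (Finset V × Finset V)) (i : ℕ)
    (x : cellsD (critOf W (Kset X T)) i → ℤ) (s : cellsD (critOf W (Kset X T)) i) :
    extMap X T W i x (critKIncl X T W i s) = x s :=
  (extMap_apply X T W i x _).trans (dif_pos s.2.1)

lemma extMap_eq_zero_of_notMem_range (X T : SComplex V) (W : Set (Finset V × Finset V))
    (i : ℕ) (x : cellsD (critOf W (Kset X T)) i → ℤ)
    {s : cellsD (critOf W (↑X.faces : Set (Finset V))) i}
    (hs : s ∉ Set.range (critKIncl X T W i)) :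
    extMap X T W i x s = 0 := by
  rw [mem_range_critKIncl_iff, not_not] at hs
  exact (extMap_apply X T W i x s).trans
    (dif_neg fun h => ((mem_critOf_Kset_iff X T W s.1).mp h).2 hs)

lemma mem_TSub_iff (X T : SComplex V) (W : Set (Finset V × Finset V)) (i : ℕ)
    (y : cellsD (critOf W (↑X.faces : Set (Finset V))) i → ℤ) :
    y ∈ TSub X T W i ↔ ∀ s, y (critKIncl X T W i s) = 0 := by
  simp only [TSub, Submodule.mem_iInf, LinearMap.mem_ker, LinearMap.proj_apply]
  constructor
  · intro hy s
    exact hy _ ((mem_range_critKIncl_iff X T W _).mp ⟨s, rfl⟩)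
  · intro hy s hs
    obtain ⟨t, rfl⟩ := (mem_range_critKIncl_iff X T W s).mpr hs
    exact hy t

lemma qext_eq_mkQ_iff (X T : SComplex V) (W : Set (Finset V × Finset V)) (i : ℕ)
    (x : cellsD (critOf W (Kset X T)) i → ℤ)
    (y : cellsD (critOf W (↑X.faces : Set (Finset V))) i → ℤ) :
    qext X T W i x = (TSub X T W i).mkQ y ↔ x = y ∘ critKIncl X T W i := by
  rw [qext, LinearMap.comp_apply, Submodule.mkQ_apply, Submodule.mkQ_apply,
    Submodule.Quotient.eq, mem_TSub_iff, funext_iff]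
  simp only [Pi.sub_apply, extMap_critKIncl, sub_eq_zero, Function.comp_apply]

lemma qext_bijective (X T : SComplex V) (W : Set (Finset V × Finset V)) (i : ℕ) :
    Function.Bijective (qext X T W i) := by
  constructor
  · intro x x' hxx'
    rw [(qext_eq_mkQ_iff X T W i x (extMap X T W i x')).mp hxx']
    exact funext (extMap_critKIncl X T W i x')
  · intro y
    obtain ⟨y, rfl⟩ := Submodule.mkQ_surjective (TSub X T W i) y
    exact ⟨_, (qext_eq_mkQ_iff X T W i _ y).mpr rfl⟩

lemma morseBd_critOf_Kset (X T : SComplex V) (W : Set (Finset V × Finset V)) (i : ℕ)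
    (x : cellsD (critOf W (Kset X T)) (i + 1) → ℤ) :
    morseBd W (critOf W (Kset X T)) i x =
      morseBd W (critOf W (↑X.faces : Set (Finset V))) i (extMap X T W (i + 1) x) ∘
        critKIncl X T W i := by
  funext σ
  simp only [Function.comp_apply, morseBd, Matrix.mulVecLin_apply, Matrix.mulVec, dotProduct,
    Matrix.of_apply]
  exact Fintype.sum_of_injective _ (cellsD.inclusion_injective _) _ _
    (fun τ hτ => by rw [extMap_eq_zero_of_notMem_range X T W _ x hτ, mul_zero])
    (fun τ => congrArg (morseCoeff W τ.1 σ.1 * ·) (extMap_critKIncl X T W (i + 1) x τ).symm)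

end QuotientMorseComplex

theorem stmt_9_general {V : Type u} [DecidableEq V] [LinearOrder V] [Fintype V]
    (X T : SComplex V)
    (W : Set (Finset V × Finset V)) :
    ∀ i : ℕ, Function.Bijective (qext X T W i) ∧
      ∀ x : cellsD (critOf W (Kset X T)) (i + 1) → ℤ,
        qext X T W i (morseBd W (critOf W (Kset X T)) i x) =
          (TSub X T W i).mkQ
            (morseBd W (critOf W (↑X.faces : Set (Finset V))) i
              (extMap X T W (i + 1) x)) :=
  fun i => ⟨qext_bijective X T W i,
    fun x => (qext_eq_mkQ_iff X T W i _ _).mpr (morseBd_critOf_Kset X T W i x)⟩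

/-- For a gradient `W` on the open complex `K = X \ T`, extended to `X` with
all cells of `T` critical, the Morse complex of `K` maps isomorphically, as a chain
complex, onto the quotient Morse complex `M(X)/M(T)`. -/
theorem stmt_9 {V : Type u} [DecidableEq V] [LinearOrder V] [Fintype V]
    (X T : SComplex V) (hT : T.faces ⊆ X.faces)
    (W : Set (Finset V × Finset V)) (hW : IsGradientOn (Kset X T) W) :
    ∀ i : ℕ, Function.Bijective (qext X T W i) ∧
      ∀ x : cellsD (critOf W (Kset X T)) (i + 1) → ℤ,
        qext X T W i (morseBd W (critOf W (Kset X T)) i x) =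
          (TSub X T W i).mkQ
            (morseBd W (critOf W (↑X.faces : Set (Finset V))) i
              (extMap X T W (i + 1) x)) :=
  stmt_9_general X T W
end

section
/- Let K = X \ T be an open simplicial complex with a discrete gradient V_K having c_i critical cells of dimension i. Then rank H_i^{BM}(K) ≤ c_i for all i, where H_i^{BM}(K) ≅ H_i(X, T) is Borel–Moore (relative) homology. -/
open Finset
open scoped Classical

universe u

variable {V : Type u} [DecidableEq V]

/-!
If `(α, β)` is a pair of the gradient, the boundary column `∂β` lies in the image of `∂`, and
the columns of all pairs whose `β` has a fixed dimension are linearly independent: acyclicity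
makes their incidence matrix with the `α`s triangular for the gradient-path order, with `±1` on
the diagonal. Since `K = X \ T` is convex in the face poset, `∂ ∘ ∂ = 0`, and rank–nullity gives
`rank Hᵢ = #(i-cells) - rank im ∂ᵢ - rank im ∂ᵢ₊₁`. The two ranks are at least the numbers of
pairs with `β` of dimension `i` and `i + 1`, and every `i`-cell is critical or the `β` of a pair
of the first kind or the `α` of a pair of the second kind, so `rank Hᵢ ≤ cᵢ`.
-/

theorem LinearIndependent.natCard_le_rank_range {R M N ι : Type*} [Semiring R] [Nontrivial R]
    [AddCommMonoid M] [AddCommMonoid N] [Module R M] [Module R N] [Finite ι] {d : M →ₗ[R] N}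
    {u : ι → M} (hu : LinearIndependent R (d ∘ u)) :
    (Nat.card ι : Cardinal) ≤ Module.rank R (LinearMap.range d) := by
  have := (LinearIndependent.of_comp (LinearMap.range d).subtype hu :
    LinearIndependent R (d.rangeRestrict ∘ u)).cardinal_lift_le_rank
  rwa [← Nat.cast_card, Cardinal.lift_natCast, Cardinal.nat_le_lift_iff] at this

section HomologyRank

universe v

variable {R : Type*} {A B : Type v} {C : Type*} [Ring R] [HasRankNullity.{v} R] [AddCommGroup A]
  [AddCommGroup B] [AddCommGroup C] [Module R A] [Module R B] [Module R C]

theorem Hgy.rank_add_rank_range_add_rank_range {d1 : B →ₗ[R] A} {d2 : C →ₗ[R] B}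
    (h : d1 ∘ₗ d2 = 0) :
    Module.rank R (Hgy d1 d2) + Module.rank R (LinearMap.range d2) +
      Module.rank R (LinearMap.range d1) = Module.rank R B := by
  rw [← (Submodule.comapSubtypeEquivOfLe (LinearMap.range_le_ker_iff.2 h)).rank_eq,
    Submodule.rank_quotient_add_rank, add_comm, LinearMap.rank_range_add_rank_ker]

theorem Hgy.finrank_add_card_add_card_le [StrongRankCondition R] [Module.Finite R B]
    [Module.Free R B] {d1 : B →ₗ[R] A} {d2 : C →ₗ[R] B} (h : d1 ∘ₗ d2 = 0)
    {ι κ : Type*} [Finite ι] [Finite κ] {u : ι → B} (hu : LinearIndependent R (d1 ∘ u))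
    {v : κ → C} (hv : LinearIndependent R (d2 ∘ v)) :
    Module.finrank R (Hgy d1 d2) + Nat.card κ + Nat.card ι ≤ Module.finrank R B := by
  have := nontrivial_of_invariantBasisNumber R
  have hle : Module.rank R (Hgy d1 d2) + Nat.card κ + Nat.card ι ≤ Module.finrank R B := by
    rw [Module.finrank_eq_rank, ← Hgy.rank_add_rank_range_add_rank_range h]
    gcongr
    exacts [hv.natCard_le_rank_range, hu.natCard_le_rank_range]
  have hH : Module.rank R (Hgy d1 d2) ≤ Module.finrank R B :=
    (le_self_add.trans le_self_add).trans hle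
  obtain ⟨n, hn⟩ := Cardinal.lt_aleph0.1 (hH.trans_lt Cardinal.natCast_lt_aleph0)
  rw [Module.finrank_eq_of_rank_eq hn]
  rw [hn] at hle
  exact_mod_cast hle

end HomologyRank

theorem Face1.exists_eq_insert {ρ σ τ : Finset V} (h1 : Face1 ρ σ) (h2 : Face1 σ τ) :
    ∃ w ∈ τ \ ρ, σ = insert w ρ := by
  obtain ⟨w, hw⟩ := card_eq_one.1 (show #(σ \ ρ) = 1 by
    rw [card_sdiff_of_subset h1.1, ← h1.2]; omega)
  have hwσ : w ∈ σ \ ρ := hw ▸ mem_singleton_self w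
  refine ⟨w, sdiff_subset_sdiff h2.1 le_rfl hwσ, ?_⟩
  rw [← sdiff_union_of_subset h1.1, hw, insert_eq]

section Boundary

variable [LinearOrder V]

theorem incSign_ne_zero_iff {σ τ : Finset V} : incSign σ τ ≠ 0 ↔ Face1 σ τ := by
  unfold incSign
  split_ifs with h <;> simp [h]

theorem incSign_insert {ρ : Finset V} {u : V} (hu : u ∉ ρ) :
    incSign ρ (insert u ρ) = (-1 : ℤ) ^ #{x ∈ ρ | x < u} := by
  have hface : Face1 ρ (insert u ρ) := ⟨subset_insert _ _, (card_insert_of_notMem hu).symm⟩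
  rw [incSign, if_pos hface, insert_sdiff_cancel hu, sum_singleton, filter_insert,
    if_neg (lt_irrefl u)]

theorem incSign_insert_mul_add_incSign_insert_mul {ρ : Finset V} {u v : V} (hu : u ∉ ρ)
    (hv : v ∉ ρ) (huv : u < v) :
    incSign ρ (insert u ρ) * incSign (insert u ρ) (insert u (insert v ρ)) +
      incSign ρ (insert v ρ) * incSign (insert v ρ) (insert u (insert v ρ)) = 0 := by
  have hvu : v ∉ insert u ρ := by simp [huv.ne', hv]
  have huv' : u ∉ insert v ρ := by simp [huv.ne, hu]
  rw [insert_comm u v ρ, incSign_insert hu, incSign_insert hvu, ← insert_comm u v ρ,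
    incSign_insert hv, incSign_insert huv', filter_insert, if_pos huv, filter_insert,
    if_neg (asymm huv), card_insert_of_notMem (fun h => hu (mem_filter.1 h).1), pow_succ]
  ring

variable [Fintype V]

theorem sum_incSign_mul_incSign_of_sdiff_eq_pair {S : Set (Finset V)} (hS : S.OrdConnected)
    {ρ τ : Finset V} (hρ : ρ ∈ S) (hτ : τ ∈ S) {i : ℕ} (hρi : #ρ = i) (hρτ : ρ ⊆ τ) {u v : V}
    (huv : u < v) (hτρ : τ \ ρ = {u, v}) :
    ∑ σ : cellsD S (i + 1), incSign ρ σ.1 * incSign σ.1 τ = 0 := by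
  have hτ_eq : τ = insert u (insert v ρ) := by
    rw [← sdiff_union_of_subset hρτ, hτρ, insert_union, ← insert_eq]
  let cell (w : V) (hw : w ∈ τ \ ρ) : cellsD S (i + 1) :=
    ⟨insert w ρ, hS.out hρ hτ ⟨subset_insert w ρ, insert_subset (mem_sdiff.1 hw).1 hρτ⟩,
      by rw [card_insert_of_notMem (mem_sdiff.1 hw).2, hρi]⟩
  have hu : u ∈ τ \ ρ := by simp [hτρ]
  have hv : v ∈ τ \ ρ := by simp [hτρ]
  have hne : cell u hu ≠ cell v hv := fun h => by
    have : v ∈ insert u ρ := by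
      rw [show insert u ρ = insert v ρ from congrArg Subtype.val h]; exact mem_insert_self v ρ
    simp [huv.ne', (mem_sdiff.1 hv).2] at this
  rw [Fintype.sum_eq_add (cell u hu) (cell v hv) hne, hτ_eq]
  · exact incSign_insert_mul_add_incSign_insert_mul (mem_sdiff.1 hu).2 (mem_sdiff.1 hv).2 huv
  · rintro σ ⟨hσu, hσv⟩
    by_contra hσ
    obtain ⟨w, hw, hσw⟩ := Face1.exists_eq_insert
      (incSign_ne_zero_iff.1 (left_ne_zero_of_mul hσ))
      (incSign_ne_zero_iff.1 (right_ne_zero_of_mul hσ))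
    rw [hτρ, mem_insert, mem_singleton] at hw
    rcases hw with rfl | rfl
    exacts [hσu (Subtype.ext hσw), hσv (Subtype.ext hσw)]

theorem sum_incSign_mul_incSign {S : Set (Finset V)} (hS : S.OrdConnected) {ρ τ : Finset V}
    (hρ : ρ ∈ S) (hτ : τ ∈ S) {i : ℕ} (hρi : #ρ = i) :
    ∑ σ : cellsD S (i + 1), incSign ρ σ.1 * incSign σ.1 τ = 0 := by
  by_contra hsum
  obtain ⟨σ, -, hσ⟩ := exists_ne_zero_of_sum_ne_zero hsum
  have hρσ := incSign_ne_zero_iff.1 (left_ne_zero_of_mul hσ)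
  have hστ := incSign_ne_zero_iff.1 (right_ne_zero_of_mul hσ)
  have hρτ := hρσ.1.trans hστ.1
  obtain ⟨u, v, huv, hτρ⟩ := card_eq_two.1 (show #(τ \ ρ) = 2 by
    rw [card_sdiff_of_subset hρτ, ← hστ.2, ← hρσ.2]; omega)
  rcases huv.lt_or_gt with huv | hvu
  · exact hsum (sum_incSign_mul_incSign_of_sdiff_eq_pair hS hρ hτ hρi hρτ huv hτρ)
  · exact hsum (sum_incSign_mul_incSign_of_sdiff_eq_pair hS hρ hτ hρi hρτ hvu
      (hτρ.trans (pair_comm u v)))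

theorem simpBd_comp_simpBd {S : Set (Finset V)} (hS : S.OrdConnected) (i : ℕ) :
    simpBd S i ∘ₗ simpBd S (i + 1) = 0 := by
  rw [simpBd, simpBd, ← Matrix.mulVecLin_mul, ← Matrix.mulVecLin_zero]
  congr 1
  ext ρ τ
  exact sum_incSign_mul_incSign hS ρ.2.1 τ.2.1 ρ.2.2

theorem simpBd_single_one {S : Set (Finset V)} {i : ℕ} (τ : cellsD S (i + 1)) :
    simpBd S i (Pi.single τ 1) = fun σ => incSign σ.1 τ.1 := by
  rw [simpBd, Matrix.mulVecLin_apply, Matrix.mulVec_single_one]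
  rfl

end Boundary

theorem Kset_ordConnected (X T : SComplex V) : (Kset X T).OrdConnected := by
  refine ⟨fun ρ hρ τ hτ σ ⟨hρσ, hστ⟩ => ⟨X.down_closed τ hτ.1 σ hστ ?_, fun hσ => ?_⟩⟩
  · exact (X.nonempty_of_mem ρ hρ.1).mono hρσ
  · exact hρ.2 (T.down_closed σ hσ ρ hρσ (X.nonempty_of_mem ρ hρ.1))

def gradStep {V : Type*} (W : Set (Finset V × Finset V)) (p q : Finset V × Finset V) : Prop :=
  p ∈ W ∧ q ∈ W ∧ VStep p q

theorem isVPath_of_reflTransGen_gradStep {V : Type*} {W : Set (Finset V × Finset V)}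
    {p q : Finset V × Finset V} (hp : p ∈ W) (h : Relation.ReflTransGen (gradStep W) p q) :
    ∃ l, IsVPath W (p :: l) ∧ (p :: l).getLast (List.cons_ne_nil p l) = q := by
  obtain ⟨l, hchain, hlast⟩ := List.exists_isChain_cons_of_relationReflTransGen h
  refine ⟨l, ⟨fun x hx => ?_, hchain.imp fun _ _ h => h.2.2⟩, hlast⟩
  exact hchain.induction (· ∈ W) _ (fun _ _ h _ => h.2.1) (fun _ => hp) x hx

theorem wellFounded_transGen_gradStep {V : Type*} [Finite V] {W : Set (Finset V × Finset V)}
    (hW : ¬ HasClosedVPath W) : WellFounded (Relation.TransGen (gradStep W)) := by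
  have : Std.Irrefl (Relation.TransGen (gradStep W)) := ⟨fun p hp => by
    obtain ⟨q, hpq, hqp⟩ := Relation.TransGen.tail'_iff.1 hp
    obtain ⟨l, hl, hlast⟩ := isVPath_of_reflTransGen_gradStep hqp.2.1 hpq
    exact hW ⟨p, l, hl, hlast ▸ hqp.2.2⟩⟩
  exact Finite.wellFounded_of_trans_of_irrefl _

/-- Indexed like `simpBd S j`: the upper cells of these pairs have `j + 1` vertices. -/
def pairsD {V : Type*} (W : Set (Finset V × Finset V)) (j : ℕ) : Type _ :=
  {p : Finset V × Finset V // p ∈ W ∧ #p.2 = j + 1}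

noncomputable instance {V : Type*} [Fintype V] (W : Set (Finset V × Finset V)) (j : ℕ) :
    Fintype (pairsD W j) := by
  unfold pairsD; infer_instance

namespace pairsD

variable {V : Type*} {S : Set (Finset V)} {W : Set (Finset V × Finset V)} {j : ℕ}

def lower (hW : IsVFOn S W) (p : pairsD W j) : cellsD S j :=
  ⟨p.1.1, (hW.1 p.1 p.2.1).1, by have := (hW.1 p.1 p.2.1).2.2.2; have := p.2.2; omega⟩

def upper (hW : IsVFOn S W) (p : pairsD W j) : cellsD S (j + 1) :=
  ⟨p.1.2, (hW.1 p.1 p.2.1).2.1, p.2.2⟩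

end pairsD

section Gradient

variable [LinearOrder V] [Fintype V] {S : Set (Finset V)} {W : Set (Finset V × Finset V)}

theorem linearIndependent_simpBd_single_upper (hW : IsGradientOn S W) (j : ℕ) :
    LinearIndependent ℤ (simpBd S j ∘ fun p : pairsD W j => Pi.single (p.upper hW.1) 1) := by
  have hcol : simpBd S j ∘ (fun p : pairsD W j => Pi.single (p.upper hW.1) 1) =
      fun p σ => incSign σ.1 p.1.2 :=
    funext fun p => simpBd_single_one _
  rw [hcol, Fintype.linearIndependent_iff]
  intro g hg
  by_contra! hsupp
  obtain ⟨m, hm, hmin⟩ := (InvImage.wf (fun p : pairsD W j => p.1)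
    (wellFounded_transGen_gradStep hW.2)).has_min {p | g p ≠ 0} hsupp
  -- Minimality of `m` makes it the only pair in the support whose column meets its lower cell.
  have heval := congrFun hg (m.lower hW.1)
  simp only [Finset.sum_apply, Pi.smul_apply, smul_eq_mul, Pi.zero_apply] at heval
  rw [sum_eq_single m ?_ (by simp)] at heval
  · exact mul_ne_zero hm (incSign_ne_zero_iff.2 (hW.1.1 m.1 m.2.1).2.2) heval
  · intro b _ hbm
    by_contra hb
    exact hmin b (left_ne_zero_of_mul hb) (.single ⟨b.2.1, m.2.1,
      incSign_ne_zero_iff.1 (right_ne_zero_of_mul hb),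
      (hW.1.2 b.1 b.2.1 m.1 m.2.1 (Subtype.coe_ne_coe.2 hbm)).1.symm⟩)

end Gradient

theorem card_cellsD_le {V : Type*} [Fintype V] {S : Set (Finset V)}
    {W : Set (Finset V × Finset V)} (hW : IsVFOn S W) (j : ℕ) :
    Nat.card (cellsD S (j + 1)) ≤
      Nat.card (cellsD (critOf W S) (j + 1)) + Nat.card (pairsD W j) +
        Nat.card (pairsD W (j + 1)) := by
  rw [← Nat.card_sum, ← Nat.card_sum]
  refine Nat.card_le_card_of_surjective
    (Sum.elim (Sum.elim (fun s => ⟨s.1, s.2.1.1, s.2.2⟩) (pairsD.upper hW)) (pairsD.lower hW))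
    fun s => ?_
  by_cases hup : ∃ p ∈ W, p.2 = s.1
  · obtain ⟨p, hp, hps⟩ := hup
    exact ⟨.inl (.inr ⟨p, hp, hps ▸ s.2.2⟩), Subtype.ext hps⟩
  by_cases hlow : ∃ p ∈ W, p.1 = s.1
  · obtain ⟨p, hp, hps⟩ := hlow
    have := (hW.1 p hp).2.2.2
    exact ⟨.inr ⟨p, hp, by rw [← this, hps, s.2.2]⟩, Subtype.ext hps⟩
  exact ⟨.inl (.inl ⟨s.1, ⟨s.2.1, fun p hp => ⟨fun h => hlow ⟨p, hp, h⟩,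
    fun h => hup ⟨p, hp, h⟩⟩⟩, s.2.2⟩), rfl⟩

theorem stmt_11_general {V : Type u} [DecidableEq V] [LinearOrder V] [Fintype V]
    (X T : SComplex V)
    (W : Set (Finset V × Finset V)) (hW : IsGradientOn (Kset X T) W) (i : ℕ) :
    Module.finrank ℤ (BMHomology (Kset X T) i) ≤
      Nat.card (cellsD (critOf W (Kset X T)) (i + 1)) := by
  have hrank := Hgy.finrank_add_card_add_card_le (simpBd_comp_simpBd (Kset_ordConnected X T) i)
    (linearIndependent_simpBd_single_upper hW i)
    (linearIndependent_simpBd_single_upper hW (i + 1))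
  rw [Module.finrank_fintype_fun_eq_card, ← Nat.card_eq_fintype_card] at hrank
  have hcount := card_cellsD_le hW.1 i
  unfold BMHomology
  omega

/-- Weak Morse inequalities for open simplicial complexes: the rank of the
Borel–Moore homology `H_i^{BM}(K) = H_i(X, T)` is at most the number of critical
`i`-cells of a discrete gradient on `K = X \ T`. -/
theorem stmt_11 {V : Type u} [DecidableEq V] [LinearOrder V] [Fintype V]
    (X T : SComplex V) (hT : T.faces ⊆ X.faces)
    (W : Set (Finset V × Finset V)) (hW : IsGradientOn (Kset X T) W) (i : ℕ) :
    Module.finrank ℤ (BMHomology (Kset X T) i) ≤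
      Nat.card (cellsD (critOf W (Kset X T)) (i + 1)) :=
  stmt_11_general X T W hW i
end

section
/- Let f be a discrete Morse function on a finite simplicial complex X and for a ∈ ℝ let X_a be the level subcomplex generated by all simplices with f-value at most a. If the interval [a, b] contains no critical value of f, then X_b simplicially collapses onto X_a. -/
open Finset
open scoped Classical

universe u

variable {V : Type u} [DecidableEq V]

/-!
A cell `ρ` lies in `X_c` exactly when the minimum of `f` over the cofaces of `ρ` is at most `c`.
By the Morse condition this minimum is attained at `ρ` itself or at a facet-coface `σ` with
`f σ ≤ f ρ`, i.e. a gradient pair `(ρ, σ)`. Hence paired cells enter the filtration together, and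
a cell of `X_b \ X_a` that is unpaired would be critical with value in `(a, b]`. So every cell of
`X_b \ X_a` is paired. Among the pairs outside `X_a`, the one whose lower cell has the largest
value is free, and removing it keeps all these properties; this yields the collapse `X_b ↘ X_a`.
-/

section Collapse

variable {V : Type*}

lemma Face1.ssubset {σ τ : Finset V} (h : Face1 σ τ) : σ ⊂ τ :=
  h.1.ssubset_of_ne fun he => by subst he; have := h.2; omega

/-- Closed under passing to nonempty faces; unlike `IsLowerSet`, this never forces `∅ ∈ Y`. -/
def IsDownClosed (Y : Set (Finset V)) : Prop :=
  ∀ ρ ∈ Y, ∀ ν, ν ⊆ ρ → ν.Nonempty → ν ∈ Y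

lemma IsDownClosed.diff_pair {Y : Set (Finset V)} (hY : IsDownClosed Y) {ρ τ : Finset V}
    (hρτ : ρ ⊂ τ) (hfree : ∀ β ∈ Y, ρ ⊂ β → β = τ) : IsDownClosed (Y \ {ρ, τ}) := by
  rintro γ ⟨hγY, hγ⟩ _ hνγ hν
  refine ⟨hY γ hγY _ hνγ hν, ?_⟩
  rintro (rfl | rfl)
  · exact hγ (.inr (hfree γ hγY (hνγ.ssubset_of_ne fun h => hγ (.inl h.symm))))
  · exact hγ (.inr (hfree γ hγY (hρτ.trans_subset hνγ)))

lemma isDownClosed_sublevel (S : Set (Finset V)) (f : Finset V → ℝ) (c : ℝ) :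
    IsDownClosed (sublevel S f c) :=
  fun _ ⟨_, σ, hσ, hc, hsub⟩ _ hν hne => ⟨hne, σ, hσ, hc, hν.trans hsub⟩

lemma sublevel_mono (S : Set (Finset V)) (f : Finset V → ℝ) {a b : ℝ} (hab : a ≤ b) :
    sublevel S f a ⊆ sublevel S f b :=
  fun _ ⟨hne, σ, hσ, ha, hsub⟩ => ⟨hne, σ, hσ, ha.trans hab, hsub⟩

lemma mem_gradSet {S : Set (Finset V)} {f : Finset V → ℝ} {α β : Finset V} :
    (α, β) ∈ gradSet S f ↔ α ∈ S ∧ β ∈ S ∧ Face1 α β ∧ f β ≤ f α :=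
  Iff.rfl

def IsMatchedOutside (W : Set (Finset V × Finset V)) (Y L : Set (Finset V)) : Prop :=
  ∀ ρ ∈ Y, ρ ∉ L → ∃ π ∈ Y, (ρ, π) ∈ W ∨ (π, ρ) ∈ W

namespace IsDMFOn

variable {S : Set (Finset V)} {f : Finset V → ℝ}

lemma eq_of_mem_gradSet_of_mem_gradSet_left (hf : IsDMFOn S f) {α β β' : Finset V}
    (h : (α, β) ∈ gradSet S f) (h' : (α, β') ∈ gradSet S f) : β = β' :=
  (hf α h.1).1 h.2 h'.2

lemma eq_of_mem_gradSet_of_mem_gradSet_right (hf : IsDMFOn S f) {α α' β : Finset V}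
    (h : (α, β) ∈ gradSet S f) (h' : (α', β) ∈ gradSet S f) : α = α' :=
  (hf β h.2.1).2 ⟨h.1, h.2.2⟩ ⟨h'.1, h'.2.2⟩

end IsDMFOn

variable [DecidableEq V]

abbrev SComplex.cells (X : SComplex V) : Set (Finset V) := ↑X.faces

lemma SComplex.isDownClosed (X : SComplex V) : IsDownClosed X.cells :=
  X.down_closed

lemma SComplex.sublevel_subset_cells {X : SComplex V} (f : Finset V → ℝ) (c : ℝ) :
    sublevel X.cells f c ⊆ X.cells :=
  fun _ ⟨hne, σ, hσ, _, hsub⟩ => X.down_closed σ hσ _ hsub hne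

lemma face1_iff {σ τ : Finset V} : Face1 σ τ ↔ ∃ x ∉ σ, insert x σ = τ :=
  Finset.exists_eq_insert_iff.symm

lemma face1_erase {σ : Finset V} {x : V} (hx : x ∈ σ) : Face1 (σ.erase x) σ :=
  ⟨Finset.erase_subset x σ, Finset.card_erase_add_one hx⟩

lemma IsDownClosed.eq_of_ssubset {Y : Set (Finset V)} (hY : IsDownClosed Y)
    {ρ τ : Finset V} (hρτ : Face1 ρ τ) (hfree : ∀ β ∈ Y, Face1 ρ β → β = τ) {β : Finset V}
    (hβ : β ∈ Y) (hρβ : ρ ⊂ β) : β = τ := by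
  have hins : ∀ x ∈ β, x ∉ ρ → insert x ρ = τ := fun x hxβ hxρ =>
    hfree _ (hY β hβ _ (Finset.insert_subset hxβ hρβ.subset) (Finset.insert_nonempty _ _))
      (face1_iff.mpr ⟨x, hxρ, rfl⟩)
  obtain ⟨x, hxβ, hxρ⟩ := Finset.exists_of_ssubset hρβ
  refine Finset.Subset.antisymm (fun y hyβ => ?_) ?_
  · by_cases hyρ : y ∈ ρ
    · exact hρτ.1 hyρ
    · exact hins y hyβ hyρ ▸ Finset.mem_insert_self y ρ
  · exact hins x hxβ hxρ ▸ Finset.insert_subset hxβ hρβ.subset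

namespace IsDMFOn

variable {S : Set (Finset V)} {f : Finset V → ℝ}

lemma not_mem_gradSet_of_mem_gradSet (hf : IsDMFOn S f) (hS : IsDownClosed S)
    {α β γ : Finset V} (hαβ : (α, β) ∈ gradSet S f) : (β, γ) ∉ gradSet S f := by
  rw [mem_gradSet] at hαβ ⊢
  rintro ⟨hβ, hγ, hβγ, hfγβ⟩
  obtain ⟨hα, -, hαβ, hfβα⟩ := hαβ
  obtain ⟨x, hxα, rfl⟩ := face1_iff.mp hαβ
  obtain ⟨y, hyβ, rfl⟩ := face1_iff.mp hβγ
  -- `insert y α` is a second face of `γ` over `α`, so both inequalities at `α` and `γ` are strict.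
  have hyx : y ≠ x := fun h => hyβ (h ▸ Finset.mem_insert_self x α)
  have hyα : y ∉ α := fun h => hyβ (Finset.mem_insert_of_mem h)
  have hne : insert y α ≠ insert x α := fun h => hyβ (h ▸ Finset.mem_insert_self y α)
  have hmem : insert y α ∈ S := hS _ hγ _
    (Finset.insert_subset_insert y (Finset.subset_insert x α)) (Finset.insert_nonempty _ _)
  have hlow : f α < f (insert y α) := lt_of_not_ge fun h =>
    hne (hf.eq_of_mem_gradSet_of_mem_gradSet_left
      ⟨hα, hmem, face1_iff.mpr ⟨y, hyα, rfl⟩, h⟩ ⟨hα, hβ, hαβ, hfβα⟩)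
  have hup : f (insert y α) < f (insert y (insert x α)) := lt_of_not_ge fun h =>
    hne (hf.eq_of_mem_gradSet_of_mem_gradSet_right
      ⟨hmem, hγ, face1_iff.mpr ⟨x, by simp [hyx.symm, hxα], Finset.insert_comm _ _ _⟩, h⟩
      ⟨hβ, hγ, hβγ, hfγβ⟩)
  linarith

variable {X : SComplex V}

lemma exists_min_coface (hf : IsDMFOn X.cells f) {ρ : Finset V} (hρ : ρ ∈ X.faces) :
    ∃ σ ∈ X.faces, ρ ⊆ σ ∧ (∀ σ' ∈ X.faces, ρ ⊆ σ' → f σ ≤ f σ') ∧ (σ = ρ ∨ Face1 ρ σ) := by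
  obtain ⟨σ, ⟨hσ, hρσ⟩, hmin⟩ := Set.exists_min_image {σ | σ ∈ X.faces ∧ ρ ⊆ σ} f
    (X.faces.finite_toSet.subset fun _ h => h.1) ⟨ρ, hρ, subset_rfl⟩
  refine ⟨σ, hσ, hρσ, fun σ' h h' => hmin σ' ⟨h, h'⟩, ?_⟩
  by_contra! hcon
  -- Otherwise two distinct facets of `σ` contain `ρ`, and minimality puts both above `σ`.
  have hfacet : ∀ z ∈ σ, z ∉ ρ → σ.erase z ∈ {ν | ν ∈ X.cells ∧ Face1 ν σ ∧ f σ ≤ f ν} := by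
    intro z hzσ hzρ
    have hρz : ρ ⊆ σ.erase z := Finset.subset_erase.mpr ⟨hρσ, hzρ⟩
    have hz : σ.erase z ∈ X.faces :=
      X.down_closed σ hσ _ (Finset.erase_subset z σ) ((X.nonempty_of_mem ρ hρ).mono hρz)
    exact ⟨hz, face1_erase hzσ, hmin _ ⟨hz, hρz⟩⟩
  obtain ⟨x, hxσ, hxρ⟩ := Finset.exists_of_ssubset (hρσ.ssubset_of_ne (Ne.symm hcon.1))
  have hne : ρ ≠ σ.erase x := fun h => hcon.2 (h ▸ face1_erase hxσ)
  obtain ⟨y, hyσx, hyρ⟩ :=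
    Finset.exists_of_ssubset ((Finset.subset_erase.mpr ⟨hρσ, hxρ⟩).ssubset_of_ne hne)
  have hyσ : y ∈ σ := Finset.mem_of_mem_erase hyσx
  have heq : σ.erase x = σ.erase y := (hf σ hσ).2 (hfacet x hxσ hxρ) (hfacet y hyσ hyρ)
  exact Finset.notMem_erase y σ (heq ▸ hyσx)

lemma mem_sublevel_iff_of_mem_gradSet (hf : IsDMFOn X.cells f) {ρ τ : Finset V}
    (hρτ : (ρ, τ) ∈ gradSet X.cells f) (c : ℝ) :
    τ ∈ sublevel X.cells f c ↔ ρ ∈ sublevel X.cells f c := by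
  refine ⟨fun h => isDownClosed_sublevel _ _ _ τ h ρ hρτ.2.2.1.1 (X.nonempty_of_mem ρ hρτ.1), ?_⟩
  rintro ⟨-, σ, hσ, hσc, hρσ⟩
  obtain ⟨σ₀, hσ₀, -, hmin, hσ₀ρ | hρσ₀⟩ := hf.exists_min_coface hρτ.1
  · refine ⟨X.nonempty_of_mem τ hρτ.2.1, τ, hρτ.2.1, ?_, subset_rfl⟩
    linarith [hρτ.2.2.2, hmin σ hσ hρσ, congrArg f hσ₀ρ]
  · have hσ₀τ : σ₀ = τ := hf.eq_of_mem_gradSet_of_mem_gradSet_left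
      ⟨hρτ.1, hσ₀, hρσ₀, hmin ρ hρτ.1 subset_rfl⟩ hρτ
    exact ⟨X.nonempty_of_mem τ hρτ.2.1, τ, hρτ.2.1, hσ₀τ ▸ (hmin σ hσ hρσ).trans hσc, subset_rfl⟩

lemma exists_pair_of_regular (hf : IsDMFOn X.cells f) {a b : ℝ}
    (hreg : ∀ σ, IsCriticalIn X.cells f σ → f σ ∉ Set.Icc a b)
    {ρ : Finset V} (hρb : ρ ∈ sublevel X.cells f b) (hρa : ρ ∉ sublevel X.cells f a) :
    ∃ π, (ρ, π) ∈ gradSet X.cells f ∨ (π, ρ) ∈ gradSet X.cells f := by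
  obtain ⟨hne, σ, hσ, hσb, hρσ⟩ := hρb
  have hρ : ρ ∈ X.faces := X.down_closed σ hσ ρ hρσ hne
  obtain ⟨σ₀, hσ₀, -, hmin, rfl | hface⟩ := hf.exists_min_coface hρ
  · by_contra! hunmatched
    refine hreg σ₀ ⟨hρ, fun ⟨β, hβ, h⟩ => (hunmatched β).1 ⟨hρ, hβ, h⟩,
      fun ⟨ν, hν, h⟩ => (hunmatched ν).2 ⟨hν, hρ, h⟩⟩ ⟨?_, (hmin σ hσ hρσ).trans hσb⟩
    exact le_of_not_ge fun h => hρa ⟨hne, σ₀, hρ, h, subset_rfl⟩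
  · exact ⟨σ₀, .inl ⟨hρ, hσ₀, hface, hmin ρ hρ subset_rfl⟩⟩

/-- Among the lower cells of pairs of `Y` above level `a`, one of largest value is free:
any other facet-coface would have a larger value and, being paired too, contradict maximality. -/
lemma exists_free_pair (hf : IsDMFOn X.cells f) {a : ℝ}
    {Y : Set (Finset V)} (hYX : Y ⊆ X.cells) (hY : IsDownClosed Y)
    (hmatch : IsMatchedOutside (gradSet X.cells f) Y (sublevel X.cells f a))
    (hYa : ¬ Y ⊆ sublevel X.cells f a) :
    ∃ ρ τ, ρ ∈ Y ∧ τ ∈ Y ∧ ρ ∉ sublevel X.cells f a ∧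
      (ρ, τ) ∈ gradSet X.cells f ∧ ∀ β ∈ Y, ρ ⊂ β → β = τ := by
  set Xa := sublevel X.cells f a
  set P := {ρ | ρ ∈ Y ∧ ρ ∉ Xa ∧ ∃ τ ∈ Y, (ρ, τ) ∈ gradSet X.cells f}
  have hP : P.Nonempty := by
    obtain ⟨ρ, hρY, hρa⟩ := Set.not_subset.mp hYa
    obtain ⟨π, hπY, hρπ | hπρ⟩ := hmatch ρ hρY hρa
    · exact ⟨ρ, hρY, hρa, π, hπY, hρπ⟩
    · exact ⟨π, hπY, fun h => hρa ((hf.mem_sublevel_iff_of_mem_gradSet hπρ a).mpr h), ρ, hρY,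
        hπρ⟩
  obtain ⟨ρ, ⟨hρY, hρa, τ, hτY, hρτ⟩, hmax⟩ :=
    Set.exists_max_image P f (X.faces.finite_toSet.subset fun _ h => hYX h.1) hP
  have hfacet : ∀ β ∈ Y, Face1 ρ β → β = τ := by
    intro β hβY hρβ
    by_contra hβτ
    have hlt : f ρ < f β := lt_of_not_ge fun h =>
      hβτ (hf.eq_of_mem_gradSet_of_mem_gradSet_left ⟨hρτ.1, hYX hβY, hρβ, h⟩ hρτ)
    have hβa : β ∉ Xa := fun h =>
      hρa (isDownClosed_sublevel _ _ _ β h ρ hρβ.1 (X.nonempty_of_mem ρ hρτ.1))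
    obtain ⟨π, hπY, hβπ | hπβ⟩ := hmatch β hβY hβa
    · linarith [hmax β ⟨hβY, hβa, π, hπY, hβπ⟩]
    · have hπa : π ∉ Xa := fun h => hβa ((hf.mem_sublevel_iff_of_mem_gradSet hπβ a).mpr h)
      linarith [hmax π ⟨hπY, hπa, β, hβY, hπβ⟩, hπβ.2.2.2]
  exact ⟨ρ, τ, hρY, hτY, hρa, hρτ, fun β hβ h => hY.eq_of_ssubset hρτ.2.2.1 hfacet hβ h⟩

lemma isMatchedOutside_diff_pair (hf : IsDMFOn X.cells f)
    {Y L : Set (Finset V)} (hmatch : IsMatchedOutside (gradSet X.cells f) Y L)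
    {ρ τ : Finset V} (hρτ : (ρ, τ) ∈ gradSet X.cells f) :
    IsMatchedOutside (gradSet X.cells f) (Y \ {ρ, τ}) L := by
  rintro γ ⟨hγY, hγ⟩ hγL
  obtain ⟨π, hπY, hπ⟩ := hmatch γ hγY hγL
  refine ⟨π, ⟨hπY, ?_⟩, hπ⟩
  rintro (rfl | rfl)
  · rcases hπ with hγπ | hπγ
    · exact hf.not_mem_gradSet_of_mem_gradSet X.isDownClosed hγπ hρτ
    · exact hγ (.inr (hf.eq_of_mem_gradSet_of_mem_gradSet_left hπγ hρτ))
  · rcases hπ with hγπ | hπγ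
    · exact hγ (.inl (hf.eq_of_mem_gradSet_of_mem_gradSet_right hγπ hρτ))
    · exact hf.not_mem_gradSet_of_mem_gradSet X.isDownClosed hρτ hπγ

theorem reflTransGen_elemCollapse_sublevel (hf : IsDMFOn X.cells f) {a : ℝ}
    {Y : Set (Finset V)} (hXaY : sublevel X.cells f a ⊆ Y) (hYX : Y ⊆ X.cells)
    (hY : IsDownClosed Y)
    (hmatch : IsMatchedOutside (gradSet X.cells f) Y (sublevel X.cells f a)) :
    Relation.ReflTransGen ElemCollapse Y (sublevel X.cells f a) := by
  induction hn : Y.ncard using Nat.strong_induction_on generalizing Y with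
  | _ n ih =>
  by_cases hYa : Y ⊆ sublevel X.cells f a
  · rw [hYa.antisymm hXaY]
  obtain ⟨ρ, τ, hρY, hτY, hρa, hρτ, hfree⟩ := hf.exists_free_pair hYX hY hmatch hYa
  have hτa : τ ∉ sublevel X.cells f a :=
    fun h => hρa ((hf.mem_sublevel_iff_of_mem_gradSet hρτ a).mp h)
  have hlt : (Y \ {ρ, τ}).ncard < n := hn ▸ Set.ncard_lt_ncard
    (Set.sdiff_subset.ssubset_of_not_subset fun h => (h hρY).2 (.inl rfl))
    (X.faces.finite_toSet.subset hYX)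
  refine .head ⟨ρ, τ, hρY, hτY, hρτ.2.2.1, hfree, rfl⟩ (ih _ hlt ?_ (Set.sdiff_subset.trans hYX)
    (hY.diff_pair hρτ.2.2.1.ssubset hfree) (hf.isMatchedOutside_diff_pair hmatch hρτ) rfl)
  exact fun γ hγ => ⟨hXaY hγ, by rintro (rfl | rfl) <;> contradiction⟩

end IsDMFOn

end Collapse

/-- If the interval `[a, b]` contains no critical value of a discrete Morse
function `f` on a finite simplicial complex `X`, then the level subcomplex `X_b`
simplicially collapses onto `X_a`. -/
theorem stmt_13 {V : Type u} [DecidableEq V] (X : SComplex V) (f : Finset V → ℝ)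
    (hf : IsDMFOn (↑X.faces : Set (Finset V)) f) (a b : ℝ) (hab : a ≤ b)
    (hreg : ∀ σ, IsCriticalIn (↑X.faces : Set (Finset V)) f σ → f σ ∉ Set.Icc a b) :
    Relation.ReflTransGen ElemCollapse
      (sublevel (↑X.faces : Set (Finset V)) f b)
      (sublevel (↑X.faces : Set (Finset V)) f a) := by
  refine hf.reflTransGen_elemCollapse_sublevel (sublevel_mono _ f hab)
    (SComplex.sublevel_subset_cells f b) (isDownClosed_sublevel _ f b) fun ρ hρb hρa => ?_
  obtain ⟨π, hπ⟩ := hf.exists_pair_of_regular hreg hρb hρa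
  refine ⟨π, ?_, hπ⟩
  rcases hπ with hρπ | hπρ
  · exact (hf.mem_sublevel_iff_of_mem_gradSet hρπ b).mpr hρb
  · exact (hf.mem_sublevel_iff_of_mem_gradSet hπρ b).mp hρb
end
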